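/- Let P be the transition matrix of a positive recurrent single-birth Markov chain on ℤ⁺ with stationary distribution π having finite mean, and assume S_P := sup_{h∈H} sup_{l∈ℤ⁺} |m_l(h)| < ∞. Fix n∈ℤ⁺ and a probability distribution (ν_0,...,ν_n) on {0,...,n}, and let Q be the (n+1)×(n+1) matrix with Q_{i,j}=P_{i,j} for 0≤i≤n−1 and 0≤j≤n, and Q_{n,j}=P_{n,j}+ν_j·P_{n,n+1} for 0≤j≤n (the augmented northwest truncation of P). Let X be a random variable on {0,...,n} whose distribution is stationary for Q, and write 𝔼ν=∑_{j=0}^n j·ν_j. Then d_TV(X,π) ≤ S_P · ℙ(X=n) · (n+1−𝔼ν) · P_{n,n+1}. -/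

import Mathlib

open scoped BigOperators

/-- `P` is a (row-stochastic) transition matrix on `ℤ⁺ = ℕ`. -/
def IsTransMat (P : ℕ → ℕ → ℝ) : Prop :=
  (∀ i j, 0 ≤ P i j) ∧ ∀ i, HasSum (P i) 1

/-- `P` is the transition matrix of a single-birth chain:
`P i (i+1) > 0` and `P i j = 0` for `j > i + 1`. -/
def IsSingleBirth (P : ℕ → ℕ → ℝ) : Prop :=
  IsTransMat P ∧ (∀ i, 0 < P i (i + 1)) ∧ ∀ i j, i + 1 < j → P i j = 0

/-- `pim` is a stationary distribution for `P`. -/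
def IsStationaryDist (P : ℕ → ℕ → ℝ) (pim : ℕ → ℝ) : Prop :=
  (∀ j, 0 ≤ pim j) ∧ HasSum pim 1 ∧ ∀ j, ∑' i, pim i * P i j = pim j

/-- Tail probability `∑_{k > j} μ k` of a mass function `μ`. -/
noncomputable def tail (μ : ℕ → ℝ) (j : ℕ) : ℝ := ∑' k, if j < k then μ k else 0

/-- Total variation distance between two mass functions on `ℕ`:
`d_TV = ∑_j |μ j - ν j| = sup_{|h| ≤ 1} |𝔼 h(X) - 𝔼 h(Y)|`. -/
noncomputable def dTV (μ ν : ℕ → ℝ) : ℝ := ∑' j, |μ j - ν j|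

/-- `m` is the sequence `m_j(h)` given by the single-birth recursion:
`m_0(h) = ĥ(0)/P_{0,1}` and, for `j ≥ 1`,
`m_j(h) = (1/P_{j,j+1}) (ĥ(j) + ∑_{k=0}^{j-1} m_k(h) ∑_{l=0}^{k} P_{j,l})`,
where `ĥ(j) = h(j) - ∑_k h(k) π_k`. -/
def IsMSeq (P : ℕ → ℕ → ℝ) (pim : ℕ → ℝ) (h : ℕ → ℝ) (m : ℕ → ℝ) : Prop :=
  m 0 = (h 0 - ∑' k, h k * pim k) / P 0 1 ∧
  ∀ j, 1 ≤ j →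
    m j = (1 / P j (j + 1)) *
      ((h j - ∑' k, h k * pim k) +
        ∑ k ∈ Finset.range j, m k * ∑ l ∈ Finset.range (k + 1), P j l)

/-- The set of values `|m_l(h)|` over `h ∈ H` (i.e. `|h| ≤ 1`) and `l ∈ ℤ⁺`;
its supremum is `S_P`. -/
def MSet (P : ℕ → ℕ → ℝ) (pim : ℕ → ℝ) : Set ℝ :=
  {x | ∃ h m, (∀ j, |h j| ≤ 1) ∧ IsMSeq P pim h m ∧ ∃ l, x = |m l|}


noncomputable def mseq (P : ℕ → ℕ → ℝ) (pim : ℕ → ℝ) (h : ℕ → ℝ) : ℕ → ℝ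
  | 0 => (h 0 - ∑' k, h k * pim k) / P 0 1
  | (j+1) => (1 / P (j+1) (j+1+1)) *
      ((h (j+1) - ∑' k, h k * pim k) +
        ∑ k ∈ (Finset.range (j+1)).attach,
          mseq P pim h k.1 * ∑ l ∈ Finset.range (k.1 + 1), P (j+1) l)
  decreasing_by exact Finset.mem_range.mp k.2

lemma mseq_isMSeq (P : ℕ → ℕ → ℝ) (pim h : ℕ → ℝ) :
    IsMSeq P pim h (mseq P pim h) := by
  constructor
  · simp [mseq]
  · intro j hj
    match j, hj with
    | (j+1), _ =>
      rw [mseq, ← Finset.sum_attach (Finset.range (j+1))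
        (fun k => mseq P pim h k * ∑ l ∈ Finset.range (k + 1), P (j+1) l)]


/-- **Truncation bound.** Let `Q` be the augmented `(n+1) × (n+1)` northwest
truncation of `P`, with last row `Q_{n,j} = P_{n,j} + ν_j P_{n,n+1}` for a
probability distribution `ν` on `{0,…,n}`, and let `X` (supported on
`{0,…,n}`, with mass function `μ`) have the stationary distribution of `Q`.
Then `d_TV(X, π) ≤ S_P ℙ(X=n) (n + 1 - 𝔼ν) P_{n,n+1}`. -/
theorem truncation_bound
    (P : ℕ → ℕ → ℝ) (pim : ℕ → ℝ)
    (hP : IsSingleBirth P) (hpim : IsStationaryDist P pim)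
    (hpimMean : Summable fun k : ℕ => (k : ℝ) * pim k)
    (hSfin : BddAbove (MSet P pim))
    (n : ℕ) (ν : ℕ → ℝ)
    (hν0 : ∀ j, j ≤ n → 0 ≤ ν j)
    (hν1 : ∑ j ∈ Finset.range (n + 1), ν j = 1)
    (Q : ℕ → ℕ → ℝ)
    (hQdef : ∀ i j, i ≤ n → j ≤ n →
      Q i j = if i = n then P n j + ν j * P n (n + 1) else P i j)
    (μ : ℕ → ℝ) (hμ0 : ∀ j, 0 ≤ μ j)
    (hμsupp : ∀ j, n < j → μ j = 0)
    (hμ1 : ∑ j ∈ Finset.range (n + 1), μ j = 1)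
    (hμstat : ∀ j, j ≤ n → ∑ i ∈ Finset.range (n + 1), μ i * Q i j = μ j) :
    dTV μ pim ≤ sSup (MSet P pim) * μ n *
      (((n : ℝ) + 1) - ∑ j ∈ Finset.range (n + 1), (j : ℝ) * ν j) *
      P n (n + 1) := by
  obtain ⟨⟨hPnn, hProw⟩, hPpos, hPzero⟩ := hP
  set S := sSup (MSet P pim) with hS
  set h : ℕ → ℝ := fun j => if 0 ≤ μ j - pim j then 1 else -1 with hh
  have habs1 : ∀ j, |h j| = 1 := by
    intro j; simp only [hh]; split <;> simp
  have habs : ∀ j, |h j| ≤ 1 := fun j => le_of_eq (habs1 j)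
  have hsign : ∀ j, h j * (μ j - pim j) = |μ j - pim j| := by
    intro j
    simp only [hh]
    by_cases hd : 0 ≤ μ j - pim j
    · rw [if_pos hd, one_mul, abs_of_nonneg hd]
    · rw [if_neg hd, abs_of_neg (lt_of_not_ge hd)]; ring
  set m := mseq P pim h with hm
  have hmIs : IsMSeq P pim h m := mseq_isMSeq P pim h
  have hmS : ∀ l, |m l| ≤ S := fun l => le_csSup hSfin ⟨h, m, habs, hmIs, l, rfl⟩
  have hS0 : 0 ≤ S := le_trans (abs_nonneg _) (hmS 0)
  set c := ∑' k, h k * pim k with hc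
  -- key recursion
  have key : ∀ j, P j (j+1) * m j
      = (h j - c) + ∑ k ∈ Finset.range j, m k * ∑ l ∈ Finset.range (k+1), P j l := by
    intro j
    rcases Nat.eq_zero_or_pos j with rfl | hj
    · simp only [Finset.range_zero, Finset.sum_empty, add_zero, hmIs.1]
      rw [mul_div_cancel₀ _ (ne_of_gt (hPpos 0))]
    · rw [hmIs.2 j hj, one_div, ← mul_assoc, mul_inv_cancel₀ (ne_of_gt (hPpos j)), one_mul,
        ← hc]
  have rowsum : ∀ j, ∑ l ∈ Finset.range (j+2), P j l = 1 := by
    intro j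
    have h1 : ∑' l, P j l = 1 := (hProw j).tsum_eq
    rw [← h1, tsum_eq_sum]
    intro l hl
    apply hPzero j l
    have hge : j + 2 ≤ l := Nat.le_of_not_lt (fun hcon => hl (Finset.mem_range.mpr hcon))
    omega
  set g : ℕ → ℝ := fun i => -∑ k ∈ Finset.range i, m k with hg
  have hgd : ∀ l j, l ≤ j → g l - g j = ∑ k ∈ Finset.Ico l j, m k := by
    intro l j hlj
    simp only [hg]
    rw [Finset.sum_Ico_eq_sub _ hlj]; ring
  have swap : ∀ j, ∑ l ∈ Finset.range (j+1), P j l * ∑ k ∈ Finset.Ico l j, m k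
      = ∑ k ∈ Finset.range j, m k * ∑ l ∈ Finset.range (k+1), P j l := by
    intro j
    have h1 : ∀ l, P j l * ∑ k ∈ Finset.Ico l j, m k
        = ∑ k ∈ Finset.range j, if l ≤ k then P j l * m k else 0 := by
      intro l
      rw [Finset.mul_sum, ← Finset.sum_filter]
      apply Finset.sum_congr _ (fun _ _ => rfl)
      ext k
      simp only [Finset.mem_Ico, Finset.mem_filter, Finset.mem_range]
      tauto
    simp_rw [h1]
    rw [Finset.sum_comm]
    apply Finset.sum_congr rfl
    intro k hk
    have hkj : k < j := Finset.mem_range.mp hk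
    rw [← Finset.sum_filter]
    have hfil : Finset.filter (fun l => l ≤ k) (Finset.range (j+1)) = Finset.range (k+1) := by
      ext l
      simp only [Finset.mem_filter, Finset.mem_range]
      omega
    rw [hfil, ← Finset.sum_mul, mul_comm]
  have poisson : ∀ j, ∑ l ∈ Finset.range (j+2), P j l * g l = g j - (h j - c) := by
    intro j
    have e1 : ∑ l ∈ Finset.range (j+2), P j l * g l
        = ∑ l ∈ Finset.range (j+2), P j l * (g l - g j) + g j := by
      simp_rw [mul_sub]
      rw [Finset.sum_sub_distrib, ← Finset.sum_mul, rowsum j, one_mul]; ring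
    have e2 : ∑ l ∈ Finset.range (j+2), P j l * (g l - g j)
        = P j (j+1) * (g (j+1) - g j) + ∑ l ∈ Finset.range (j+1), P j l * (g l - g j) := by
      rw [Finset.sum_range_succ]; ring
    have e3 : g (j+1) - g j = -m j := by
      simp only [hg, Finset.sum_range_succ]; ring
    have e4 : ∑ l ∈ Finset.range (j+1), P j l * (g l - g j)
        = ∑ k ∈ Finset.range j, m k * ∑ l ∈ Finset.range (k+1), P j l := by
      rw [← swap j]
      apply Finset.sum_congr rfl
      intro l hl
      rw [hgd l j (Nat.lt_succ_iff.mp (Finset.mem_range.mp hl))]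
    have hk := key j
    rw [e1, e2, e3, e4]
    linarith
  -- extend row sums to range (n+2)
  have hext : ∀ j, j ≤ n → ∑ l ∈ Finset.range (j+2), P j l * g l
      = ∑ l ∈ Finset.range (n+2), P j l * g l := by
    intro j hj
    apply Finset.sum_subset
    · intro l hl; simp only [Finset.mem_range] at *; omega
    · intro l _ hl
      rw [hPzero j l (by simp only [Finset.mem_range] at hl; omega), zero_mul]
  have hstat : ∑ j ∈ Finset.range (n+1), μ j * ∑ l ∈ Finset.range (n+1), Q j l * g l
      = ∑ j ∈ Finset.range (n+1), μ j * g j := by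
    simp_rw [Finset.mul_sum]
    rw [Finset.sum_comm]
    apply Finset.sum_congr rfl
    intro l hl
    have hln : l ≤ n := Nat.lt_succ_iff.mp (Finset.mem_range.mp hl)
    calc ∑ j ∈ Finset.range (n+1), μ j * (Q j l * g l)
        = (∑ j ∈ Finset.range (n+1), μ j * Q j l) * g l := by
          rw [Finset.sum_mul]; exact Finset.sum_congr rfl (fun j _ => by ring)
      _ = μ l * g l := by rw [hμstat l hln]
  have hDj : ∀ j ∈ Finset.range (n+1),
      μ j * (∑ l ∈ Finset.range (n+1), Q j l * g l) -
        μ j * (∑ l ∈ Finset.range (n+2), P j l * g l)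
      = if j = n then
          μ n * (P n (n+1) * ((∑ l ∈ Finset.range (n+1), ν l * g l) - g (n+1)))
        else 0 := by
    intro j hj
    have hjn : j ≤ n := Nat.lt_succ_iff.mp (Finset.mem_range.mp hj)
    by_cases hjeq : j = n
    · subst hjeq
      rw [if_pos rfl]
      have e1 : ∑ l ∈ Finset.range (j+1), Q j l * g l
          = ∑ l ∈ Finset.range (j+1), P j l * g l
            + P j (j+1) * ∑ l ∈ Finset.range (j+1), ν l * g l := by
        rw [Finset.mul_sum, ← Finset.sum_add_distrib]
        apply Finset.sum_congr rfl
        intro l hl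
        rw [hQdef j l le_rfl (Nat.lt_succ_iff.mp (Finset.mem_range.mp hl)), if_pos rfl]
        ring
      have e2 : ∑ l ∈ Finset.range (j+2), P j l * g l
          = ∑ l ∈ Finset.range (j+1), P j l * g l + P j (j+1) * g (j+1) := by
        rw [show j+2 = (j+1)+1 from rfl, Finset.sum_range_succ]
      rw [e1, e2]; ring
    · rw [if_neg hjeq]
      have hjlt : j < n := lt_of_le_of_ne hjn hjeq
      have e1 : ∑ l ∈ Finset.range (n+1), Q j l * g l
          = ∑ l ∈ Finset.range (n+1), P j l * g l := by
        apply Finset.sum_congr rfl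
        intro l hl
        rw [hQdef j l hjn (Nat.lt_succ_iff.mp (Finset.mem_range.mp hl)), if_neg hjeq]
      have e2 : ∑ l ∈ Finset.range (n+2), P j l * g l
          = ∑ l ∈ Finset.range (n+1), P j l * g l := by
        rw [show n+2 = (n+1)+1 from rfl, Finset.sum_range_succ,
          hPzero j (n+1) (by omega), zero_mul, add_zero]
      rw [e1, e2]; ring
  set T := ∑ l ∈ Finset.range (n+1), ν l * ∑ k ∈ Finset.Ico l (n+1), m k with hTdef
  have hmean : ∑ j ∈ Finset.range (n+1), μ j * (h j - c)
      = μ n * (P n (n+1) * T) := by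
    have e0 : ∀ j ∈ Finset.range (n+1), μ j * (h j - c)
        = μ j * (∑ l ∈ Finset.range (n+1), Q j l * g l)
          - μ j * (∑ l ∈ Finset.range (n+2), P j l * g l)
          + (μ j * g j - μ j * (∑ l ∈ Finset.range (n+1), Q j l * g l)) := by
      intro j hj
      have hjn : j ≤ n := Nat.lt_succ_iff.mp (Finset.mem_range.mp hj)
      have := poisson j
      rw [hext j hjn] at this
      rw [show μ j * (h j - c) = μ j * g j
          - μ j * (∑ l ∈ Finset.range (n+2), P j l * g l) from by rw [this]; ring]
      ring
    rw [Finset.sum_congr rfl e0, Finset.sum_add_distrib, Finset.sum_congr rfl hDj,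
      Finset.sum_sub_distrib, hstat, sub_self, add_zero]
    rw [Finset.sum_ite_eq' (Finset.range (n+1)) n
      (fun _ => μ n * (P n (n+1) * ((∑ l ∈ Finset.range (n+1), ν l * g l) - g (n+1)))),
      if_pos (Finset.self_mem_range_succ n)]
    have e3 : (∑ l ∈ Finset.range (n+1), ν l * g l) - g (n+1) = T := by
      have hg1 : g (n+1) = (∑ l ∈ Finset.range (n+1), ν l) * g (n+1) := by
        rw [hν1, one_mul]
      rw [hTdef, hg1, Finset.sum_mul, ← Finset.sum_sub_distrib]
      apply Finset.sum_congr rfl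
      intro l hl
      rw [← mul_sub, hgd l (n+1) (by
        have := Finset.mem_range.mp hl; omega)]
    rw [e3]
  have hT : |T| ≤ S * (((n:ℝ)+1) - ∑ j ∈ Finset.range (n + 1), (j : ℝ) * ν j) := by
    calc |T| ≤ ∑ l ∈ Finset.range (n+1), |ν l * ∑ k ∈ Finset.Ico l (n+1), m k| :=
        Finset.abs_sum_le_sum_abs _ _
      _ ≤ ∑ l ∈ Finset.range (n+1), ν l * (((((n:ℝ)+1) - l)) * S) := by
          apply Finset.sum_le_sum
          intro l hl
          have hln : l ≤ n := Nat.lt_succ_iff.mp (Finset.mem_range.mp hl)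
          rw [abs_mul, abs_of_nonneg (hν0 l hln)]
          apply mul_le_mul_of_nonneg_left _ (hν0 l hln)
          calc |∑ k ∈ Finset.Ico l (n+1), m k| ≤ ∑ k ∈ Finset.Ico l (n+1), |m k| :=
              Finset.abs_sum_le_sum_abs _ _
            _ ≤ ∑ _k ∈ Finset.Ico l (n+1), S := Finset.sum_le_sum (fun k _ => hmS k)
            _ = (((n:ℝ)+1) - l) * S := by
                rw [Finset.sum_const, Nat.card_Ico, nsmul_eq_mul]
                congr 1
                rw [Nat.cast_sub (by omega : l ≤ n+1)]
                push_cast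
                ring
      _ = S * (((n:ℝ)+1) - ∑ j ∈ Finset.range (n + 1), (j : ℝ) * ν j) := by
          rw [Finset.sum_congr rfl
            (fun l _ => (by ring :
              ν l * (((((n:ℝ)+1) - l)) * S)
                = (((n:ℝ)+1)) * ν l * S - ((l:ℝ) * ν l) * S)),
            Finset.sum_sub_distrib, ← Finset.sum_mul, ← Finset.sum_mul, ← Finset.mul_sum,
            hν1]
          ring
  have hμsum : Summable (fun j => h j * μ j) := by
    apply summable_of_ne_finset_zero (s := Finset.range (n+1))
    intro j hj
    have hnj : n < j := by
      by_contra hcon; exact hj (Finset.mem_range.mpr (by omega))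
    rw [hμsupp j hnj, mul_zero]
  have hπsum : Summable (fun j => h j * pim j) := by
    apply Summable.of_abs
    have e : (fun j => |h j * pim j|) = pim := by
      funext j; rw [abs_mul, habs1 j, one_mul, abs_of_nonneg (hpim.1 j)]
    rw [e]
    exact hpim.2.1.summable
  have hdtv : dTV μ pim = ∑ j ∈ Finset.range (n+1), μ j * (h j - c) := by
    have e0 : ∀ j : ℕ, |μ j - pim j| = h j * μ j - h j * pim j := by
      intro j; rw [← hsign j]; ring
    have e1 : ∑ j ∈ Finset.range (n+1), μ j * (h j - c)
        = ∑ j ∈ Finset.range (n+1), h j * μ j - c := by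
      simp_rw [mul_sub]
      rw [Finset.sum_sub_distrib, ← Finset.sum_mul, hμ1, one_mul]
      congr 1
      exact Finset.sum_congr rfl (fun j _ => mul_comm _ _)
    rw [e1]
    unfold dTV
    rw [tsum_congr e0, Summable.tsum_sub hμsum hπsum, ← hc]
    congr 1
    apply tsum_eq_sum
    intro j hj
    have hnj : n < j := by
      by_contra hcon; exact hj (Finset.mem_range.mpr (by omega))
    rw [hμsupp j hnj, mul_zero]
  rw [hdtv, hmean]
  have hPn : 0 ≤ μ n * P n (n+1) := mul_nonneg (hμ0 n) (le_of_lt (hPpos n))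
  calc μ n * (P n (n+1) * T) = (μ n * P n (n+1)) * T := by ring
    _ ≤ (μ n * P n (n+1)) *
        (S * (((n:ℝ)+1) - ∑ j ∈ Finset.range (n + 1), (j : ℝ) * ν j)) :=
        mul_le_mul_of_nonneg_left (le_trans (le_abs_self T) hT) hPn
    _ = S * μ n * (((n:ℝ) + 1) - ∑ j ∈ Finset.range (n + 1), (j : ℝ) * ν j) * P n (n+1) := by
        ring
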